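/- Let T be a finite tree with positive edge weights and ρ > 0 under the postal model. If (u,v) ∈ E(T) and b_time(u, B(u,v)) ≤ b_time(v, B(v,u)), then b_time(v, T) ≤ b_time(u, T). -/

import Mathlib

/-!
Common definitions for the postal-model broadcasting problem on weighted trees.
-/

open SimpleGraph

namespace Postal

attribute [local instance] Classical.propDecidable

variable {V : Type*} [Fintype V] [DecidableEq V] (G : SimpleGraph V)

/-- The unique path (as a walk) between two vertices of a tree. -/
noncomputable def tPath (hG : G.IsTree) (u v : V) : G.Walk u v :=
  (hG.existsUnique_path u v).exists.choose

/-- `z` lies in the open branch `O(x,y)`: the component of `T - x` containing `y`. -/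
def inO (x y z : V) : Prop := ∃ p : G.Walk y z, x ∉ p.support

/-- The open branch `O(x,y)`. -/
def Obr (x y : V) : Set V := {z | inO G x y z}

/-- The closed branch `B(x,y) = T - O(x,y)` (it contains `x`). -/
def Bbr (x y : V) : Set V := {z | ¬ inO G x y z}

/-- The parent of `z` with respect to the root `u`: the penultimate vertex on the
unique `u`-to-`z` path. -/
noncomputable def parent (hG : G.IsTree) (u z : V) : V :=
  (tPath G hG u z).getVert ((tPath G hG u z).length - 1)

/-- The receive time of `z` under schedule `σ` when `u` originates the message:
along the unique `u`-to-`z` path, each vertex is contacted in its slot `σ`,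
contributing `σ·ρ` connection time plus the edge weight. -/
noncomputable def recvTime (hG : G.IsTree) (w : V → V → ℝ) (ρ : ℝ) (σ : V → ℕ) (u z : V) : ℝ :=
  ((tPath G hG u z).darts.map (fun d => (σ d.toProd.2 : ℝ) * ρ + w d.toProd.1 d.toProd.2)).sum

/-- A schedule `σ` is valid for source `u` broadcasting over the vertex set `S`:
every non-source vertex gets a slot `≥ 1`, and distinct vertices with the same
parent get distinct slots (a sender contacts its neighbors sequentially). -/
def Valid (hG : G.IsTree) (σ : V → ℕ) (u : V) (S : Set V) : Prop :=
  (∀ z ∈ S, z ≠ u → 1 ≤ σ z) ∧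
  (∀ z₁ ∈ S, ∀ z₂ ∈ S, z₁ ≠ u → z₂ ≠ u → z₁ ≠ z₂ →
    parent G hG u z₁ = parent G hG u z₂ → σ z₁ ≠ σ z₂)

/-- The minimum broadcast time for `u` to broadcast a message over the subtree
induced by `S` under the postal model with latency `ρ`. -/
noncomputable def bTime (hG : G.IsTree) (w : V → V → ℝ) (ρ : ℝ) (u : V) (S : Set V) : ℝ :=
  sInf {m | ∃ σ, Valid G hG σ u S ∧ m = sSup ((recvTime G hG w ρ σ u) '' S)}

/-- Broadcast time over the whole tree. -/
noncomputable def bTimeT (hG : G.IsTree) (w : V → V → ℝ) (ρ : ℝ) (u : V) : ℝ :=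
  bTime G hG w ρ u Set.univ

/-- The set of broadcast centers. -/
def BCtr (hG : G.IsTree) (w : V → V → ℝ) (ρ : ℝ) : Set V :=
  {u | ∀ v, bTimeT G hG w ρ u ≤ bTimeT G hG w ρ v}

/-- A prime broadcast center. -/
def IsPrime (hG : G.IsTree) (w : V → V → ℝ) (ρ : ℝ) (κ : V) : Prop :=
  κ ∈ BCtr G hG w ρ ∧
  ∀ u, G.Adj κ u → bTime G hG w ρ u (Bbr G u κ) ≤ bTime G hG w ρ κ (Bbr G κ u)

/-- Hop distance: number of edges on the unique path. -/
noncomputable def hop (hG : G.IsTree) (x y : V) : ℕ := (tPath G hG x y).length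

/-- Total weight of the unique `x`-to-`y` path. -/
noncomputable def pw (hG : G.IsTree) (w : V → V → ℝ) (x y : V) : ℝ :=
  ((tPath G hG x y).darts.map (fun d => w d.toProd.1 d.toProd.2)).sum

/-- Symmetric weight function. -/
def Wsymm (w : V → V → ℝ) : Prop := ∀ a b, w a b = w b a

/-- Positive weights on edges. -/
def Wpos (w : V → V → ℝ) : Prop := ∀ a b, G.Adj a b → 0 < w a b

/-- A scenario: a symmetric weight assignment within the uncertainty intervals. -/
def Scenario (lo hi : V → V → ℝ) (w : V → V → ℝ) : Prop :=
  (∀ a b, w a b = w b a) ∧ ∀ a b, G.Adj a b → lo a b ≤ w a b ∧ w a b ≤ hi a b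

/-- The maximum regret of `x`. -/
noncomputable def maxRegret (hG : G.IsTree) (lo hi : V → V → ℝ) (ρ : ℝ) (x : V) : ℝ :=
  sSup {r | ∃ w y, Scenario G lo hi w ∧ r = bTimeT G hG w ρ x - bTimeT G hG w ρ y}

/-- `w` is a worst-case scenario of the tree with respect to `x`. -/
def WorstCase (hG : G.IsTree) (lo hi : V → V → ℝ) (ρ : ℝ) (x : V) (w : V → V → ℝ) : Prop :=
  Scenario G lo hi w ∧
  ∃ y, bTimeT G hG w ρ x - bTimeT G hG w ρ y = maxRegret G hG lo hi ρ x

/-- An edge `(a,b)` lies on the unique `x`-to-`y` path. -/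
def onPath (hG : G.IsTree) (x y a b : V) : Prop :=
  a ∈ (tPath G hG x y).support ∧ b ∈ (tPath G hG x y).support

/-- The base scenario `α_{x,y}`: weight `hi` on the `x`-to-`y` path and on edges of
`B(y,x)`, weight `lo` elsewhere. -/
noncomputable def baseScenario (hG : G.IsTree) (lo hi : V → V → ℝ) (x y : V) : V → V → ℝ :=
  fun a b =>
    if onPath G hG x y a b ∨ (a ∈ Bbr G y x ∧ b ∈ Bbr G y x) then hi a b else lo a b

/-- The value `w(y,v) + b_time(v, B(v,y))` of a neighbor `v` of `y`. -/
noncomputable def nval (hG : G.IsTree) (w : V → V → ℝ) (ρ : ℝ) (y v : V) : ℝ :=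
  w y v + bTime G hG w ρ v (Bbr G v y)

/-- Scenario `β^j_{x,y}`: agrees with `α_{x,y}`, except that every edge in
`{(y,u_k)} ∪ E(B(u_k,y))` for `k > j` (with `u` the 1-based sorted enumeration
of the neighbors of `y` in `B(y,x)`) gets weight `lo`. -/
noncomputable def betaScenario (hG : G.IsTree) (lo hi : V → V → ℝ) (x y : V) {h : ℕ}
    (u : Fin h → V) (j : ℕ) : V → V → ℝ :=
  fun a b =>
    if ∃ k : Fin h, j < (k : ℕ) + 1 ∧
        ((a = y ∧ b = u k) ∨ (b = y ∧ a = u k) ∨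
          (a ∈ Bbr G (u k) y ∧ b ∈ Bbr G (u k) y)) then
      lo a b
    else baseScenario G hG lo hi x y a b

/-- Scenario `γ^j_{x,y}`: agrees with `α_{x,y}` on the edges in
`⋃_{1 ≤ k ≤ j} ({(y,u_k)} ∪ E(B(u_k,y)))` and with the scenario `s` elsewhere. -/
noncomputable def gammaScenario (hG : G.IsTree) (lo hi : V → V → ℝ) (s : V → V → ℝ)
    (x y : V) {h : ℕ} (u : Fin h → V) (j : ℕ) : V → V → ℝ :=
  fun a b =>
    if ∃ k : Fin h, (k : ℕ) + 1 ≤ j ∧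
        ((a = y ∧ b = u k) ∨ (b = y ∧ a = u k) ∨
          (a ∈ Bbr G (u k) y ∧ b ∈ Bbr G (u k) y)) then
      baseScenario G hG lo hi x y a b
    else s a b

/-- The set of neighbors of `y` inside the branch `B(y,x)`. -/
def nbrIn (x y : V) : Set V := {v | G.Adj y v ∧ v ∈ Bbr G y x}

/-!
A broadcast from `u` reaches the branch `B(v,u)` only through `v`, and `v` is called in slot
at least `1`; so `b_time(u, T) ≥ ρ + w(u,v) + b_time(v, B(v,u))`. Conversely, `v` can call `u`
first and then run a schedule of `B(v,u)` delayed by one slot, while `u` runs a schedule of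
`B(u,v)`; so `b_time(v, T) ≤ ρ + max (b_time(v, B(v,u))) (w(u,v) + b_time(u, B(u,v)))`, which
the hypothesis bounds by `ρ + w(u,v) + b_time(v, B(v,u))`.
-/

open Set

section Tree

variable {V : Type*} (G : SimpleGraph V) (hG : G.IsTree)

lemma tPath_isPath (u v : V) : (tPath G hG u v).IsPath :=
  (hG.existsUnique_path u v).exists.choose_spec

lemma eq_tPath {u v : V} {p : G.Walk u v} (hp : p.IsPath) : p = tPath G hG u v :=
  (hG.existsUnique_path u v).unique hp (tPath_isPath G hG u v)

lemma tPath_self (u : V) : tPath G hG u u = .nil :=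
  (eq_tPath G hG .nil).symm

lemma tPath_of_adj {u v : V} (h : G.Adj u v) : tPath G hG u v = .cons h .nil :=
  (eq_tPath G hG (Path.singleton h).2).symm

lemma snd_ne_of_mem_darts_tPath {x z : V} {d : G.Dart} (hd : d ∈ (tPath G hG x z).darts) :
    d.snd ≠ x := by
  have hmem : d.snd ∈ (tPath G hG x z).support.tail := by
    rw [← Walk.map_snd_darts]
    exact List.mem_map_of_mem hd
  have hnd := (tPath_isPath G hG x z).support_nodup
  rw [← Walk.cons_tail_support, List.nodup_cons] at hnd
  intro h
  rw [h] at hmem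
  exact hnd.1 hmem

lemma inO_iff {x y z : V} : inO G x y z ↔ x ∉ (tPath G hG y z).support := by
  refine ⟨?_, fun h => ⟨_, h⟩⟩
  rintro ⟨p, hp⟩
  rw [← eq_tPath G hG p.bypass_isPath]
  exact fun h => hp (p.support_bypass_subset_support h)

lemma mem_Bbr_iff {x y z : V} : z ∈ Bbr G x y ↔ x ∈ (tPath G hG y z).support := by
  simp only [Bbr, mem_ofPred_eq, inO_iff G hG, not_not]

lemma self_mem_Bbr (x y : V) : x ∈ Bbr G x y :=
  fun ⟨p, hp⟩ => hp p.end_mem_support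

lemma not_mem_Bbr_self {x y : V} (h : x ≠ y) : y ∉ Bbr G x y :=
  fun hy => hy ⟨.nil, by simpa using h⟩

lemma support_mem_Bbr {x y z c : V} (hz : z ∈ Bbr G x y) (hc : c ∈ (tPath G hG x z).support) :
    c ∈ Bbr G x y := by
  rcases eq_or_ne c x with rfl | hcx
  · exact self_mem_Bbr G c y
  rintro ⟨q, hq⟩
  have hc' : c ∈ (tPath G hG x z).reverse.support := by simpa using hc
  have hx := Walk.endpoint_notMem_support_takeUntil (tPath_isPath G hG x z).reverse hc' hcx.symm
  refine hz ⟨q.append ((tPath G hG x z).reverse.takeUntil c hc').reverse, ?_⟩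
  simp [Walk.mem_support_append_iff, hq, hx]

include hG in
lemma not_mem_Bbr_of_mem_Bbr {u v z : V} (huv : u ≠ v) (hz : z ∈ Bbr G v u) :
    z ∉ Bbr G u v := by
  rw [mem_Bbr_iff G hG]
  exact fun hu => not_mem_Bbr_self G huv.symm (support_mem_Bbr G hG hz hu)

lemma tPath_cons {u v z : V} (huv : G.Adj u v) (hz : z ∈ Bbr G v u) :
    tPath G hG u z = .cons huv (tPath G hG v z) := by
  refine (eq_tPath G hG ((tPath_isPath G hG v z).cons ?_)).symm
  rw [← mem_Bbr_iff G hG]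
  exact not_mem_Bbr_of_mem_Bbr G hG huv.ne hz

include hG in
lemma mem_Bbr_or {u v : V} (huv : G.Adj u v) (z : V) : z ∈ Bbr G u v ∨ z ∈ Bbr G v u := by
  rw [or_iff_not_imp_left, mem_Bbr_iff G hG, mem_Bbr_iff G hG]
  intro hu
  rw [← eq_tPath G hG ((tPath_isPath G hG v z).cons (h := huv) hu)]
  simp

include hG in
lemma neighbor_mem_Bbr {u v c : V} (huv : G.Adj u v) (hvc : G.Adj v c) (hcu : c ≠ u) :
    c ∈ Bbr G v u := by
  have hp : (Walk.cons huv (.cons hvc .nil)).IsPath := by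
    simp [Walk.cons_isPath_iff, huv.ne, hvc.ne, hcu.symm]
  rw [mem_Bbr_iff G hG, ← eq_tPath G hG hp]
  simp

lemma parent_mem_support (x z : V) : parent G hG x z ∈ (tPath G hG x z).support :=
  Walk.getVert_mem_support _ _

lemma parent_of_adj {x z : V} (h : G.Adj x z) : parent G hG x z = x := by
  rw [parent, tPath_of_adj G hG h]
  rfl

lemma adj_of_parent_eq {x z : V} (hzx : z ≠ x) (h : parent G hG x z = x) : G.Adj x z :=
  h ▸ Walk.adj_penultimate (Walk.not_nil_of_ne hzx.symm)

lemma parent_cons {u v z : V} (huv : G.Adj u v) (hz : z ∈ Bbr G v u) (hzv : z ≠ v) :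
    parent G hG u z = parent G hG v z := by
  rw [parent, tPath_cons G hG huv hz]
  exact Walk.penultimate_cons_of_not_nil _ _ (Walk.not_nil_of_ne hzv.symm)

include hG in
lemma parent_mem_Bbr_iff {u v z : V} (huv : G.Adj u v) (hzu : z ≠ u) :
    parent G hG v z ∈ Bbr G v u ↔ z ∈ Bbr G v u := by
  refine ⟨fun hp => (mem_Bbr_or G hG huv z).resolve_left fun hz => ?_,
    fun hz => support_mem_Bbr G hG hz (parent_mem_support G hG v z)⟩
  refine not_mem_Bbr_of_mem_Bbr G hG huv.ne hp ?_
  rw [parent_cons G hG huv.symm hz hzu]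
  exact support_mem_Bbr G hG hz (parent_mem_support G hG u z)

end Tree

section Schedules

variable {V : Type*} (G : SimpleGraph V) (hG : G.IsTree) (w : V → V → ℝ) (ρ : ℝ)

lemma recvTime_self (σ : V → ℕ) (u : V) : recvTime G hG w ρ σ u u = 0 := by
  simp [recvTime, tPath_self]

lemma recvTime_cons (σ : V → ℕ) {u v z : V} (huv : G.Adj u v) (hz : z ∈ Bbr G v u) :
    recvTime G hG w ρ σ u z = σ v * ρ + w u v + recvTime G hG w ρ σ v z := by
  rw [recvTime, tPath_cons G hG huv hz, Walk.darts_cons, List.map_cons, List.sum_cons]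
  rfl

lemma recvTime_congr {σ₁ σ₂ : V → ℕ} {x z : V}
    (h : ∀ c ∈ (tPath G hG x z).support, c ≠ x → σ₁ c = σ₂ c) :
    recvTime G hG w ρ σ₁ x z = recvTime G hG w ρ σ₂ x z := by
  unfold recvTime
  congr 1
  refine List.map_congr_left fun d hd => ?_
  rw [h _ (Walk.dart_snd_mem_support_of_mem_darts _ hd) (snd_ne_of_mem_darts_tPath G hG hd)]

lemma Valid.restrict_Bbr {σ : V → ℕ} {u v : V} (huv : G.Adj u v)
    (h : Valid G hG σ u univ) : Valid G hG σ v (Bbr G v u) := by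
  have hne : ∀ z ∈ Bbr G v u, z ≠ u := fun z hz hzu => not_mem_Bbr_self G huv.ne' (hzu ▸ hz)
  refine ⟨fun z hz _ => h.1 z trivial (hne z hz), fun z₁ h₁ z₂ h₂ hz₁ hz₂ hne₁₂ hpar => ?_⟩
  refine h.2 z₁ trivial z₂ trivial (hne z₁ h₁) (hne z₂ h₂) hne₁₂ ?_
  rw [parent_cons G hG huv h₁ hz₁, parent_cons G hG huv h₂ hz₂, hpar]

lemma bTime_set_nonempty [Countable V] (x : V) (S : Set V) :
    {m | ∃ σ, Valid G hG σ x S ∧ m = sSup ((recvTime G hG w ρ σ x) '' S)}.Nonempty := by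
  obtain ⟨f, hf⟩ := Countable.exists_injective_nat V
  refine ⟨_, fun z => f z + 1, ⟨fun _ _ _ => Nat.le_add_left _ _, ?_⟩, rfl⟩
  exact fun z₁ _ z₂ _ _ _ hne _ heq => hne (hf (Nat.succ_injective heq))

variable [Finite V]

lemma recvTime_le_sSup {σ : V → ℕ} {x z : V} {S : Set V} (hz : z ∈ S) :
    recvTime G hG w ρ σ x z ≤ sSup ((recvTime G hG w ρ σ x) '' S) :=
  le_csSup (S.toFinite.image _).bddAbove (mem_image_of_mem _ hz)

lemma sSup_recvTime_nonneg {σ : V → ℕ} {x : V} {S : Set V} (hx : x ∈ S) :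
    0 ≤ sSup ((recvTime G hG w ρ σ x) '' S) :=
  recvTime_self G hG w ρ σ x ▸ recvTime_le_sSup G hG w ρ hx

lemma bTime_le {σ : V → ℕ} {x : V} {S : Set V} (hx : x ∈ S) (hσ : Valid G hG σ x S) :
    bTime G hG w ρ x S ≤ sSup ((recvTime G hG w ρ σ x) '' S) := by
  refine csInf_le ⟨0, ?_⟩ ⟨σ, hσ, rfl⟩
  rintro _ ⟨σ', -, rfl⟩
  exact sSup_recvTime_nonneg G hG w ρ hx

lemma le_bTime {x : V} {S : Set V} {c : ℝ}
    (h : ∀ σ, Valid G hG σ x S → c ≤ sSup ((recvTime G hG w ρ σ x) '' S)) :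
    c ≤ bTime G hG w ρ x S := by
  refine le_csInf (bTime_set_nonempty G hG w ρ x S) ?_
  rintro _ ⟨σ, hσ, rfl⟩
  exact h σ hσ

lemma exists_valid_sSup_lt_bTime_add (x : V) (S : Set V) {ε : ℝ} (hε : 0 < ε) :
    ∃ σ, Valid G hG σ x S ∧ sSup ((recvTime G hG w ρ σ x) '' S) < bTime G hG w ρ x S + ε := by
  obtain ⟨_, ⟨σ, hσ, rfl⟩, hlt⟩ := Real.lt_sInf_add_pos (bTime_set_nonempty G hG w ρ x S) hε
  exact ⟨σ, hσ, hlt⟩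

lemma add_bTime_Bbr_le_bTimeT (hρ : 0 ≤ ρ) {u v : V} (huv : G.Adj u v) :
    ρ + w u v + bTime G hG w ρ v (Bbr G v u) ≤ bTimeT G hG w ρ u := by
  refine le_bTime G hG w ρ fun σ hσ => ?_
  have hσv : (1 : ℝ) ≤ σ v := by exact_mod_cast hσ.1 v trivial huv.ne'
  have hsup : sSup ((recvTime G hG w ρ σ v) '' (Bbr G v u))
      ≤ sSup ((recvTime G hG w ρ σ u) '' univ) - (ρ + w u v) := by
    refine csSup_le ((nonempty_of_mem (self_mem_Bbr G v u)).image _) ?_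
    rintro _ ⟨z, hz, rfl⟩
    have hzu := recvTime_le_sSup G hG w ρ (σ := σ) (x := u) (mem_univ z)
    rw [recvTime_cons G hG w ρ σ huv hz] at hzu
    nlinarith
  linarith [bTime_le G hG w ρ (self_mem_Bbr G v u) (hσ.restrict_Bbr G hG huv)]

end Schedules

section Merge

variable {V : Type*} (G : SimpleGraph V) (hG : G.IsTree) {u v : V} (huv : G.Adj u v)
  (σA σB : V → ℕ)

noncomputable def mergeSched (u v : V) : V → ℕ := fun z =>
  if z = u then 1 else if z ∈ Bbr G v u then (if G.Adj v z then σB z + 1 else σB z) else σA z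

lemma mergeSched_left : mergeSched G σA σB u v u = 1 :=
  if_pos rfl

include hG huv in
lemma mergeSched_of_adj {c : V} (hc : G.Adj v c) (hcu : c ≠ u) :
    mergeSched G σA σB u v c = σB c + 1 := by
  simp [mergeSched, hcu, neighbor_mem_Bbr G hG huv hc hcu, hc]

include huv in
lemma mergeSched_of_not_adj {c : V} (hc : c ∈ Bbr G v u) (hvc : ¬ G.Adj v c) :
    mergeSched G σA σB u v c = σB c := by
  have hcu : c ≠ u := fun h => not_mem_Bbr_self G huv.ne' (h ▸ hc)
  simp [mergeSched, hcu, hc, hvc]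

include hG huv in
lemma mergeSched_of_mem_Bbr {c : V} (hc : c ∈ Bbr G u v) (hcu : c ≠ u) :
    mergeSched G σA σB u v c = σA c := by
  simp [mergeSched, hcu, not_mem_Bbr_of_mem_Bbr G hG huv.ne' hc]

variable {σA σB}

include huv in
lemma mergeSched_ne_of_adj (hB : Valid G hG σB v (Bbr G v u)) {z₁ z₂ : V} (h₁ : G.Adj v z₁)
    (h₂ : G.Adj v z₂) (hne : z₁ ≠ z₂) :
    mergeSched G σA σB u v z₁ ≠ mergeSched G σA σB u v z₂ := by
  have hslot : ∀ c, G.Adj v c → c ≠ u → 2 ≤ mergeSched G σA σB u v c := fun c hc hcu => by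
    have := hB.1 c (neighbor_mem_Bbr G hG huv hc hcu) hc.ne'
    rw [mergeSched_of_adj G hG huv σA σB hc hcu]
    omega
  rcases eq_or_ne z₁ u with rfl | h₁u
  · have := hslot z₂ h₂ hne.symm
    rw [mergeSched_left]
    omega
  rcases eq_or_ne z₂ u with rfl | h₂u
  · have := hslot z₁ h₁ h₁u
    rw [mergeSched_left]
    omega
  rw [mergeSched_of_adj G hG huv σA σB h₁ h₁u, mergeSched_of_adj G hG huv σA σB h₂ h₂u]
  have := hB.2 z₁ (neighbor_mem_Bbr G hG huv h₁ h₁u) z₂ (neighbor_mem_Bbr G hG huv h₂ h₂u)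
    h₁.ne' h₂.ne' hne (by rw [parent_of_adj G hG h₁, parent_of_adj G hG h₂])
  omega

include huv in
lemma mergeSched_ne_of_parent_ne (hA : Valid G hG σA u (Bbr G u v))
    (hB : Valid G hG σB v (Bbr G v u)) {z₁ z₂ : V} (h₁ : z₁ ≠ v) (h₂ : z₂ ≠ v) (hne : z₁ ≠ z₂)
    (hpar : parent G hG v z₁ = parent G hG v z₂) (hp : parent G hG v z₁ ≠ v) :
    mergeSched G σA σB u v z₁ ≠ mergeSched G σA σB u v z₂ := by
  have hnadj : ∀ c, parent G hG v c ≠ v → ¬ G.Adj v c := fun c hc h => hc (parent_of_adj G hG h)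
  have hnu : ∀ c, parent G hG v c ≠ v → c ≠ u := fun c hc h => hnadj c hc (h ▸ huv.symm)
  have h₁u := hnu z₁ hp
  have h₂u := hnu z₂ (hpar ▸ hp)
  have hside : z₁ ∈ Bbr G v u ↔ z₂ ∈ Bbr G v u := by
    rw [← parent_mem_Bbr_iff G hG huv h₁u, ← parent_mem_Bbr_iff G hG huv h₂u, hpar]
  by_cases hz₁ : z₁ ∈ Bbr G v u
  · have hz₂ := hside.1 hz₁
    rw [mergeSched_of_not_adj G huv σA σB hz₁ (hnadj z₁ hp),
      mergeSched_of_not_adj G huv σA σB hz₂ (hnadj z₂ (hpar ▸ hp))]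
    exact hB.2 z₁ hz₁ z₂ hz₂ h₁ h₂ hne hpar
  · have hz₁' := (mem_Bbr_or G hG huv z₁).resolve_right hz₁
    have hz₂' := (mem_Bbr_or G hG huv z₂).resolve_right (mt hside.2 hz₁)
    rw [mergeSched_of_mem_Bbr G hG huv σA σB hz₁' h₁u,
      mergeSched_of_mem_Bbr G hG huv σA σB hz₂' h₂u]
    refine hA.2 z₁ hz₁' z₂ hz₂' h₁u h₂u hne ?_
    rwa [← parent_cons G hG huv.symm hz₁' h₁u, ← parent_cons G hG huv.symm hz₂' h₂u]

include huv in
lemma valid_mergeSched (hA : Valid G hG σA u (Bbr G u v)) (hB : Valid G hG σB v (Bbr G v u)) :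
    Valid G hG (mergeSched G σA σB u v) v univ := by
  refine ⟨fun z _ hzv => ?_, fun z₁ _ z₂ _ h₁ h₂ hne hpar => ?_⟩
  · rcases eq_or_ne z u with rfl | hzu
    · rw [mergeSched_left]
    rcases mem_Bbr_or G hG huv z with hz | hz
    · rw [mergeSched_of_mem_Bbr G hG huv σA σB hz hzu]
      exact hA.1 z hz hzu
    · have := hB.1 z hz hzv
      by_cases hvz : G.Adj v z
      · rw [mergeSched_of_adj G hG huv σA σB hvz hzu]
        omega
      · rwa [mergeSched_of_not_adj G huv σA σB hz hvz]
  · by_cases hp : parent G hG v z₁ = v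
    · exact mergeSched_ne_of_adj G hG huv hB (adj_of_parent_eq G hG h₁ hp)
        (adj_of_parent_eq G hG h₂ (hpar ▸ hp)) hne
    · exact mergeSched_ne_of_parent_ne G hG huv hA hB h₁ h₂ hne hpar hp

variable (w : V → V → ℝ) (ρ : ℝ)

include huv in
lemma recvTime_mergeSched_of_mem_Bbr {z : V} (hz : z ∈ Bbr G u v) :
    recvTime G hG w ρ (mergeSched G σA σB u v) v z = ρ + w v u + recvTime G hG w ρ σA u z := by
  rw [recvTime_cons G hG w ρ _ huv.symm hz, mergeSched_left,
    recvTime_congr G hG w ρ fun c hc hcu => mergeSched_of_mem_Bbr G hG huv σA σB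
      (support_mem_Bbr G hG hz hc) hcu]
  push_cast
  ring

include huv in
lemma recvTime_mergeSched_of_mem_Bbr_of_ne {z : V} (hz : z ∈ Bbr G v u) (hzv : z ≠ v) :
    recvTime G hG w ρ (mergeSched G σA σB u v) v z = ρ + recvTime G hG w ρ σB v z := by
  obtain ⟨s, hs⟩ : ∃ s, (tPath G hG v z).snd = s := ⟨_, rfl⟩
  have hvs : G.Adj v s := hs ▸ Walk.adj_snd (Walk.not_nil_of_ne hzv.symm)
  have hs_mem : s ∈ (tPath G hG v z).support := hs ▸ Walk.getVert_mem_support _ _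
  have hzs : z ∈ Bbr G s v := (mem_Bbr_iff G hG).2 hs_mem
  have hsu : s ≠ u :=
    ne_of_mem_of_not_mem (support_mem_Bbr G hG hz hs_mem) (not_mem_Bbr_self G huv.ne')
  -- in a tree, the only vertex of the path from `v` that is adjacent to `v` is its second one
  have hrest : ∀ c ∈ (tPath G hG s z).support, c ≠ s →
      mergeSched G σA σB u v c = σB c := by
    intro c hc hcs
    have hcv : c ∈ (tPath G hG v z).support := by
      rw [tPath_cons G hG hvs hzs, Walk.support_cons]
      exact List.mem_cons_of_mem _ hc
    refine mergeSched_of_not_adj G huv σA σB (support_mem_Bbr G hG hz hcv) fun hvc => hcs ?_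
    rw [← hs]
    exact hG.isAcyclic.eq_snd_of_adj_start (tPath_isPath G hG v z) hvc hcv
  rw [recvTime_cons G hG w ρ _ hvs hzs, recvTime_cons G hG w ρ _ hvs hzs,
    mergeSched_of_adj G hG huv σA σB hvs hsu, recvTime_congr G hG w ρ hrest]
  push_cast
  ring

end Merge

section Bounds

variable {V : Type*} [Finite V] (G : SimpleGraph V) (hG : G.IsTree) (w : V → V → ℝ) {ρ : ℝ}
  (hρ : 0 ≤ ρ) {u v : V} (huv : G.Adj u v)

include hρ huv in
lemma bTimeT_le_of_valid {σA σB : V → ℕ} (hA : Valid G hG σA u (Bbr G u v))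
    (hB : Valid G hG σB v (Bbr G v u)) :
    bTimeT G hG w ρ v ≤ ρ + max (sSup ((recvTime G hG w ρ σB v) '' (Bbr G v u)))
      (w v u + sSup ((recvTime G hG w ρ σA u) '' (Bbr G u v))) := by
  refine (bTime_le G hG w ρ (mem_univ v) (valid_mergeSched G hG huv hA hB)).trans
    (csSup_le ⟨_, mem_image_of_mem _ (mem_univ v)⟩ ?_)
  rintro _ ⟨z, -, rfl⟩
  rcases mem_Bbr_or G hG huv z with hz | hz
  · rw [recvTime_mergeSched_of_mem_Bbr G hG huv w ρ hz, add_assoc]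
    gcongr
    exact le_max_of_le_right (by gcongr; exact recvTime_le_sSup G hG w ρ hz)
  rcases eq_or_ne z v with rfl | hzv
  · rw [recvTime_self]
    exact add_nonneg hρ (le_max_of_le_left (sSup_recvTime_nonneg G hG w ρ (self_mem_Bbr G z u)))
  · rw [recvTime_mergeSched_of_mem_Bbr_of_ne G hG huv w ρ hz hzv]
    gcongr
    exact le_max_of_le_left (recvTime_le_sSup G hG w ρ hz)

include hρ huv in
lemma bTimeT_le_max :
    bTimeT G hG w ρ v ≤ ρ + max (bTime G hG w ρ v (Bbr G v u))
      (w v u + bTime G hG w ρ u (Bbr G u v)) := by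
  refine le_of_forall_pos_lt_add fun ε hε => ?_
  obtain ⟨σA, hA, hltA⟩ := exists_valid_sSup_lt_bTime_add G hG w ρ u (Bbr G u v) hε
  obtain ⟨σB, hB, hltB⟩ := exists_valid_sSup_lt_bTime_add G hG w ρ v (Bbr G v u) hε
  have hmax := max_lt_max hltB ((add_lt_add_iff_left (w v u)).2 hltA)
  rw [← add_assoc, max_add_add_right] at hmax
  linarith [bTimeT_le_of_valid G hG w hρ huv hA hB]

end Bounds

theorem stmt1_general {V : Type*} [Fintype V] (G : SimpleGraph V) (hG : G.IsTree)
    (w : V → V → ℝ) (hsym : Wsymm w) (hpos : Wpos G w) (ρ : ℝ) (hρ : 0 < ρ)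
    (u v : V) (huv : G.Adj u v)
    (hle : bTime G hG w ρ u (Bbr G u v) ≤ bTime G hG w ρ v (Bbr G v u)) :
    bTimeT G hG w ρ v ≤ bTimeT G hG w ρ u := by
  have hw : 0 < w u v := hpos u v huv
  calc bTimeT G hG w ρ v
      ≤ ρ + max (bTime G hG w ρ v (Bbr G v u)) (w v u + bTime G hG w ρ u (Bbr G u v)) :=
        bTimeT_le_max G hG w hρ.le huv
    _ ≤ ρ + w u v + bTime G hG w ρ v (Bbr G v u) := by
        have : max (bTime G hG w ρ v (Bbr G v u)) (w v u + bTime G hG w ρ u (Bbr G u v))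
            ≤ w u v + bTime G hG w ρ v (Bbr G v u) := by
          rw [hsym v u]
          exact max_le (by linarith) (by linarith)
        linarith
    _ ≤ bTimeT G hG w ρ u := add_bTime_Bbr_le_bTimeT G hG w ρ hρ.le huv

/-- If `(u,v) ∈ E(T)` and `b_time(u, B(u,v)) ≤ b_time(v, B(v,u))`,
then `b_time(v, T) ≤ b_time(u, T)`. -/
theorem stmt1 {V : Type*} [Fintype V] [DecidableEq V] (G : SimpleGraph V) (hG : G.IsTree)
    (w : V → V → ℝ) (hsym : Wsymm w) (hpos : Wpos G w) (ρ : ℝ) (hρ : 0 < ρ)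
    (u v : V) (huv : G.Adj u v)
    (hle : bTime G hG w ρ u (Bbr G u v) ≤ bTime G hG w ρ v (Bbr G v u)) :
    bTimeT G hG w ρ v ≤ bTimeT G hG w ρ u :=
  stmt1_general G hG w hsym hpos ρ hρ u v huv hle

end Postal
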